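/- arXiv:2308.09888 — 2 statements merged into one kernel-verified Lean document; each statement's English description precedes it below -/
import Mathlib

section
/- With Û^M_srNMC(λ) defined as above, the expectation E[Û^M_srNMC(λ)] is monotonically increasing in M: for all 1 ≤ M₁ ≤ M₂, E[Û^{M₁}_srNMC(λ)] ≤ E[Û^{M₂}_srNMC(λ)]. -/
/-!
Integrating out the observations `y^(j)`, `j ≠ i`, in the `i`-th summand turns `E[Û^M]` into the
expectation, over `θ^(1:M) ~ π_θ^M` and `y ~ ν`, of `Ent(v) = mean(v log v) - mean(v) log mean(v)`
with `v_k = l(y|θ^(k))`: the entropy of `v` under the uniform distribution on the `M` indices.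
For `M₁ ≤ M₂`, average over the `M₂` cyclic windows `r, r+1, …, r+M₁-1` of indices modulo `M₂`:
each window is again an i.i.d. sample of size `M₁`, and since `x log x` is convex, the average of
the windowed entropies is at most the entropy of the whole vector.
-/

open MeasureTheory Real Finset Function

open scoped ENNReal

namespace MeasureTheory

theorem measurePreserving_comp_of_injective {ι κ α : Type*} [Fintype ι] [Fintype κ]
    [MeasurableSpace α] (μ : Measure α) [IsProbabilityMeasure μ] {e : κ → ι}
    (he : Injective e) :
    MeasurePreserving (fun x : ι → α => x ∘ e)
      (Measure.pi fun _ => μ) (Measure.pi fun _ => μ) := by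
  classical
  have hmeas : Measurable fun x : ι → α => x ∘ e :=
    measurable_pi_lambda _ fun k => measurable_pi_apply (e k)
  refine ⟨hmeas, (Measure.pi_eq fun s hs => ?_).symm⟩
  set t : ι → Set α := Function.extend e s fun _ => Set.univ
  have hpre : (fun x : ι → α => x ∘ e) ⁻¹' Set.univ.pi s = Set.univ.pi t := by
    ext x
    simp only [Set.mem_preimage, Set.mem_univ_pi, comp_apply]
    refine ⟨fun h i => ?_, fun h k => by simpa [t, he.extend_apply] using h (e k)⟩
    by_cases hi : ∃ k, e k = i
    · obtain ⟨k, rfl⟩ := hi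
      simpa [t, he.extend_apply] using h k
    · simp [t, extend_apply' _ _ _ hi]
  rw [Measure.map_apply hmeas (MeasurableSet.univ_pi hs), hpre, Measure.pi_pi,
    ← prod_subset (subset_univ (univ.image e)) fun i _ hi => ?_,
    prod_image fun k _ k' _ h => he h]
  · simp [t, he.extend_apply]
  · have : ¬∃ k, e k = i := fun ⟨k, hk⟩ => hi (mem_image.2 ⟨k, mem_univ k, hk⟩)
    simp [t, extend_apply' _ _ _ this]

theorem Integrable.of_sum_of_le {ι α : Type*} [MeasurableSpace α] {μ : Measure α}
    {s : Finset ι} {f : ι → α → ℝ} {g : α → ℝ} (hfg : ∀ i ∈ s, f i ≤ᵐ[μ] g) (hg : Integrable g μ)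
    (hsum : Integrable (fun x => ∑ i ∈ s, f i x) μ) {i : ι} (hi : i ∈ s)
    (hf : AEStronglyMeasurable (f i) μ) : Integrable (f i) μ := by
  have hgap : Integrable (fun x => ∑ j ∈ s, (g x - f j x)) μ := by
    simp only [sum_sub_distrib]
    exact (integrable_finsetSum s fun _ _ => hg).sub hsum
  have hle : ∀ᵐ x ∂μ, ∀ j ∈ s, f j x ≤ g x := (Filter.eventually_all_finset s).2 hfg
  have hgi : Integrable (fun x => g x - f i x) μ := by
    refine hgap.mono' (hg.aestronglyMeasurable.sub hf) ?_
    filter_upwards [hle] with x hx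
    rw [Real.norm_of_nonneg (sub_nonneg.2 (hx i hi))]
    exact single_le_sum (f := fun j => g x - f j x) (fun j hj => sub_nonneg.2 (hx j hj)) hi
  exact (hg.sub hgi).congr (.of_forall fun x => sub_sub_cancel (g x) (f i x))

theorem lintegral_fin_nat_prod_eq_prod {n : ℕ} {E : Type*} [MeasurableSpace E]
    (μ : Fin n → Measure E) [∀ i, SigmaFinite (μ i)] {f : Fin n → E → ℝ≥0∞}
    (hf : ∀ i, Measurable (f i)) :
    ∫⁻ x : Fin n → E, ∏ i, f i (x i) ∂(Measure.pi μ) = ∏ i, ∫⁻ x, f i x ∂(μ i) := by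
  induction n with
  | zero => simp
  | succ n ih =>
    rw [← ((measurePreserving_piFinSuccAbove (fun i => μ i) 0).symm).lintegral_comp_emb
      (MeasurableEquiv.measurableEmbedding _)]
    simp_rw [MeasurableEquiv.piFinSuccAbove_symm_apply, Fin.insertNthEquiv,
      Fin.prod_univ_succ, Fin.insertNth_zero, Equiv.coe_fn_mk, Fin.cons_succ,
      Fin.zero_succAbove, cast_eq, Fin.cons_zero]
    rw [lintegral_prod_mul (g := fun x : Fin n → E => ∏ i, f i.succ (x i)) (hf 0).aemeasurable
      (Finset.measurable_prod _ fun i _ => (hf i.succ).comp (measurable_pi_apply i)).aemeasurable,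
      ih _ fun i => hf i.succ]

theorem lintegral_fintype_prod_eq_prod {ι E : Type*} [Fintype ι] [MeasurableSpace E]
    (μ : ι → Measure E) [∀ i, SigmaFinite (μ i)] {f : ι → E → ℝ≥0∞}
    (hf : ∀ i, Measurable (f i)) :
    ∫⁻ x : ι → E, ∏ i, f i (x i) ∂(Measure.pi μ) = ∏ i, ∫⁻ x, f i x ∂(μ i) := by
  let e := (Fintype.equivFin ι).symm
  rw [← (measurePreserving_piCongrLeft μ e).lintegral_comp_emb
    (MeasurableEquiv.measurableEmbedding _)]
  simp_rw [← e.prod_comp, MeasurableEquiv.coe_piCongrLeft, Equiv.piCongrLeft_apply_apply]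
  exact lintegral_fin_nat_prod_eq_prod _ fun i => hf (e i)

section ProdErase

variable {ι E : Type*} [Fintype ι] [DecidableEq ι]

theorem prod_update_apply {M : Type*} [CommMonoid M] (g : ι → E → M) (i : ι) (f : E → M)
    (x : ι → E) : ∏ j, update g i f j (x j) = f (x i) * ∏ j ∈ univ.erase i, g j (x j) := by
  rw [← mul_prod_erase univ _ (mem_univ i), update_self]
  exact congrArg _ (prod_congr rfl fun j hj => by rw [update_of_ne (ne_of_mem_erase hj)])

variable [MeasurableSpace E] (μ : Measure E) [SigmaFinite μ]

theorem integral_pi_mul_prod_erase {g : ι → E → ℝ} (hg : ∀ j, ∫ x, g j x ∂μ = 1) (i : ι)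
    (f : E → ℝ) :
    ∫ x : ι → E, f (x i) * ∏ j ∈ univ.erase i, g j (x j) ∂(Measure.pi fun _ => μ)
      = ∫ x, f x ∂μ := by
  simp_rw [← prod_update_apply, integral_fintype_prod_eq_prod,
    apply_update (fun _ h => ∫ x, h x ∂μ) g i f]
  simp [prod_update_of_mem (mem_univ i), hg]

theorem lintegral_pi_mul_prod_erase {g : ι → E → ℝ≥0∞} (hgm : ∀ j, Measurable (g j))
    (hg : ∀ j, ∫⁻ x, g j x ∂μ = 1) (i : ι) {f : E → ℝ≥0∞} (hf : Measurable f) :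
    ∫⁻ x : ι → E, f (x i) * ∏ j ∈ univ.erase i, g j (x j) ∂(Measure.pi fun _ => μ)
      = ∫⁻ x, f x ∂μ := by
  have hm : ∀ j, Measurable (update g i f j) := fun j => by
    rcases eq_or_ne j i with rfl | hj
    · simpa using hf
    · simpa [hj] using hgm j
  simp_rw [← prod_update_apply, lintegral_fintype_prod_eq_prod _ hm,
    apply_update (fun _ h => ∫⁻ x, h x ∂μ) g i f]
  simp [prod_update_of_mem (mem_univ i), hg]

end ProdErase

end MeasureTheory

noncomputable def uniformEntropy {ι : Type*} [Fintype ι] (v : ι → ℝ) : ℝ :=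
  (Fintype.card ι : ℝ)⁻¹ * ∑ k, v k * log (v k / ((Fintype.card ι : ℝ)⁻¹ * ∑ j, v j))

section UniformEntropy

open Fintype

variable {ι κ : Type*} [Fintype ι] [Fintype κ]

theorem uniformEntropy_eq_sub [Nonempty ι] {v : ι → ℝ} (hv : ∀ k, 0 < v k) :
    uniformEntropy v = (card ι : ℝ)⁻¹ * ∑ k, v k * log (v k)
      - ((card ι : ℝ)⁻¹ * ∑ j, v j) * log ((card ι : ℝ)⁻¹ * ∑ j, v j) := by
  have hmean : 0 < (card ι : ℝ)⁻¹ * ∑ j, v j := by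
    have := sum_pos (fun j _ => hv j) univ_nonempty
    positivity
  simp only [uniformEntropy, log_div (hv _).ne' hmean.ne', mul_sub, sum_sub_distrib, ← sum_mul]
  ring

theorem log_div_mean_le_log_card {v : ι → ℝ} (hv : ∀ k, 0 < v k) (i : ι) :
    log (v i / ((card ι : ℝ)⁻¹ * ∑ j, v j)) ≤ log (card ι) := by
  have : Nonempty ι := ⟨i⟩
  have hmean : 0 < (card ι : ℝ)⁻¹ * ∑ j, v j := by
    have := sum_pos (fun j _ => hv j) univ_nonempty
    positivity
  refine log_le_log (div_pos (hv i) hmean) ?_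
  rw [div_le_iff₀ hmean, mul_inv_cancel_left₀ (by positivity)]
  exact single_le_sum (fun j _ => (hv j).le) (mem_univ i)

theorem sum_sum_comp_add {M : Type*} [AddCommMonoid M] [AddGroup ι] (e : κ → ι) (f : ι → M) :
    ∑ r, ∑ k, f (e k + r) = card κ • ∑ i, f i := by
  have hshift : ∀ k, ∑ r, f (e k + r) = ∑ i, f i := fun k => Equiv.sum_comp (Equiv.addLeft (e k)) f
  rw [sum_comm, sum_congr rfl fun k _ => hshift k, sum_const, card_univ]

theorem sum_uniformEntropy_comp_add_le [Nonempty κ] [AddGroup ι] (e : κ → ι) {v : ι → ℝ}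
    (hv : ∀ i, 0 < v i) :
    (card ι : ℝ)⁻¹ * ∑ r, uniformEntropy (fun k => v (e k + r)) ≤ uniformEntropy v := by
  set A : ι → ℝ := fun r => (card κ : ℝ)⁻¹ * ∑ k, v (e k + r)
  have hκ : (card κ : ℝ) ≠ 0 := by positivity
  have hA : ∀ r, 0 ≤ A r := fun r =>
    mul_nonneg (by positivity) (sum_nonneg fun k _ => (hv (e k + r)).le)
  have hmeanA : (card ι : ℝ)⁻¹ * ∑ r, A r = (card ι : ℝ)⁻¹ * ∑ i, v i := by
    simp only [A, ← mul_sum, sum_sum_comp_add, nsmul_eq_mul, inv_mul_cancel_left₀ hκ]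
  have hjensen := convexOn_mul_log.map_sum_le (t := univ) (w := fun _ => (card ι : ℝ)⁻¹) (p := A)
    (fun _ _ => by positivity) (by simp) (fun r _ => hA r)
  simp only [smul_eq_mul, ← mul_sum, hmeanA] at hjensen
  have hfirst : (card ι : ℝ)⁻¹ * ∑ r, (card κ : ℝ)⁻¹ * ∑ k, v (e k + r) * log (v (e k + r))
      = (card ι : ℝ)⁻¹ * ∑ i, v i * log (v i) := by
    rw [← mul_sum, sum_sum_comp_add (f := fun i => v i * log (v i)), nsmul_eq_mul,
      inv_mul_cancel_left₀ hκ]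
  calc (card ι : ℝ)⁻¹ * ∑ r, uniformEntropy (fun k => v (e k + r))
      = (card ι : ℝ)⁻¹ * ∑ r, ((card κ : ℝ)⁻¹ * ∑ k, v (e k + r) * log (v (e k + r))
          - A r * log (A r)) := by
        simp only [uniformEntropy_eq_sub fun k => hv _, A]
    _ = (card ι : ℝ)⁻¹ * ∑ i, v i * log (v i) - (card ι : ℝ)⁻¹ * ∑ r, A r * log (A r) := by
        rw [sum_sub_distrib, mul_sub, hfirst]
    _ ≤ uniformEntropy v := by
        rw [uniformEntropy_eq_sub hv]
        exact sub_le_sub_left hjensen _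

end UniformEntropy

section Estimator

variable {Θ Y ι : Type*} [Fintype ι]

noncomputable def logMeanRatio (l : Y → Θ → ℝ) (i : ι) (p : (ι → Θ) × Y) : ℝ :=
  log (l p.2 (p.1 i) / ((Fintype.card ι : ℝ)⁻¹ * ∑ j, l p.2 (p.1 j)))

-- `w i = (θ^(i), y^(i))`
noncomputable def srNMC (l : Y → Θ → ℝ) (w : ι → Θ × Y) : ℝ :=
  (Fintype.card ι : ℝ)⁻¹ * ∑ i, logMeanRatio l i (fun j => (w j).1, (w i).2)

theorem logMeanRatio_le_log_card {l : Y → Θ → ℝ} (hl : ∀ y θ, 0 < l y θ) (i : ι) (p : (ι → Θ) × Y) :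
    logMeanRatio l i p ≤ log (Fintype.card ι) :=
  log_div_mean_le_log_card (v := fun k => l p.2 (p.1 k)) (fun _ => hl _ _) i

end Estimator

section Likelihood

variable {Θ Y : Type*} [MeasurableSpace Y] {ν : Measure Y} {l : Y → Θ → ℝ}

theorem lintegral_enorm_likelihood (hl : ∀ y θ, 0 ≤ l y θ) (hnorm : ∀ θ, ∫ y, l y θ ∂ν = 1)
    (θ : Θ) : ∫⁻ y, ‖l y θ‖ₑ ∂ν = 1 := by
  have hint : Integrable (fun y => l y θ) ν := .of_integral_ne_zero (by simp [hnorm])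
  simp_rw [enorm_of_nonneg (hl _ θ)]
  rw [← ofReal_integral_eq_lintegral_ofReal hint (.of_forall fun y => hl y θ), hnorm,
    ENNReal.ofReal_one]

variable [MeasurableSpace Θ]

theorem Measurable.likelihood_comp (hml : Measurable fun z : Θ × Y => l z.2 z.1) {β : Type*}
    [MeasurableSpace β] {f : β → Θ} {g : β → Y} (hf : Measurable f) (hg : Measurable g) :
    Measurable fun b => l (g b) (f b) :=
  hml.comp (hf.prodMk hg)

theorem integrable_likelihood {Pθ : Measure Θ} [IsFiniteMeasure Pθ] [SigmaFinite ν]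
    (hml : Measurable fun z : Θ × Y => l z.2 z.1)
    (hl : ∀ y θ, 0 ≤ l y θ) (hnorm : ∀ θ, ∫ y, l y θ ∂ν = 1) :
    Integrable (fun z : Θ × Y => l z.2 z.1) (Pθ.prod ν) := by
  refine ⟨hml.aestronglyMeasurable, ?_⟩
  rw [HasFiniteIntegral, lintegral_prod _ hml.enorm.aemeasurable]
  simp [lintegral_enorm_likelihood hl hnorm]

variable {ι : Type*} [Fintype ι] {Pθ : Measure Θ} [SigmaFinite ν]

theorem integral_pi_likelihood_mul [SigmaFinite Pθ] (hml : Measurable fun z : Θ × Y => l z.2 z.1)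
    (hl : ∀ y θ, 0 ≤ l y θ) (hnorm : ∀ θ, ∫ y, l y θ ∂ν = 1) (i : ι)
    {h : (ι → Θ) × Y → ℝ} (hh : Measurable h)
    (hint : Integrable
      (fun w : ι → Θ × Y => (∏ j, l (w j).2 (w j).1) * h (fun j => (w j).1, (w i).2))
      (Measure.pi fun _ => Pθ.prod ν)) :
    Integrable (fun p : (ι → Θ) × Y => l p.2 (p.1 i) * h p) ((Measure.pi fun _ => Pθ).prod ν) ∧
      ∫ w : ι → Θ × Y, (∏ j, l (w j).2 (w j).1) * h (fun j => (w j).1, (w i).2)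
          ∂(Measure.pi fun _ => Pθ.prod ν)
        = ∫ p, l p.2 (p.1 i) * h p ∂((Measure.pi fun _ => Pθ).prod ν) := by
  classical
  set H : (ι → Θ) × Y → ℝ := fun p => l p.2 (p.1 i) * h p
  -- Fubini over `θs`: for fixed `θs` the observations are independent, and all of them but the
  -- `i`-th integrate out to `1`.
  set F : (ι → Θ) × (ι → Y) → ℝ := fun q => H (q.1, q.2 i) * ∏ j ∈ univ.erase i, l (q.2 j) (q.1 j)
  have hF : ∀ w, (∏ j, l (w j).2 (w j).1) * h (fun j => (w j).1, (w i).2)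
      = F (MeasurableEquiv.arrowProdEquivProdArrow Θ Y ι w) := fun w => by
    change _ = l (w i).2 (w i).1 * h (fun j => (w j).1, (w i).2)
      * ∏ j ∈ univ.erase i, l (w j).2 (w j).1
    rw [← mul_prod_erase univ _ (mem_univ i)]
    ring
  have hHm : Measurable H :=
    (hml.likelihood_comp ((measurable_pi_apply i).comp measurable_fst) measurable_snd).mul hh
  have hFm : Measurable F :=
    (hHm.comp (measurable_fst.prodMk ((measurable_pi_apply i).comp measurable_snd))).mul
      (Finset.measurable_prod _ fun j _ => hml.likelihood_comp
        ((measurable_pi_apply j).comp measurable_fst) ((measurable_pi_apply j).comp measurable_snd))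
  have hΦ := measurePreserving_arrowProdEquivProdArrow Θ Y ι (fun _ => Pθ) (fun _ => ν)
  have hFint : Integrable F ((Measure.pi fun _ => Pθ).prod (Measure.pi fun _ => ν)) := by
    rw [← hΦ.integrable_comp_emb (MeasurableEquiv.measurableEmbedding _)]
    simpa only [comp_def, ← hF] using hint
  have hslice : ∀ θs, ∫ ys, F (θs, ys) ∂(Measure.pi fun _ => ν) = ∫ y, H (θs, y) ∂ν :=
    fun θs => integral_pi_mul_prod_erase ν (g := fun j y => l y (θs j)) (fun j => hnorm (θs j)) i
      (fun y => H (θs, y))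
  have hslice_enorm : ∀ θs, ∫⁻ ys, ‖F (θs, ys)‖ₑ ∂(Measure.pi fun _ => ν)
      = ∫⁻ y, ‖H (θs, y)‖ₑ ∂ν := fun θs => by
    refine (lintegral_congr fun ys => ?_).trans
      (lintegral_pi_mul_prod_erase ν (g := fun j y => ‖l y (θs j)‖ₑ)
        (fun _ => (hml.likelihood_comp measurable_const measurable_id).enorm)
        (fun j => lintegral_enorm_likelihood hl hnorm (θs j)) i
        (f := fun y => ‖H (θs, y)‖ₑ) (hHm.comp measurable_prodMk_left).enorm)
    simp only [F]
    rw [enorm_mul]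
    simp only [enorm_eq_nnnorm, nnnorm_prod, ENNReal.ofNNReal_finsetProd]
  have hHint : Integrable H ((Measure.pi fun _ => Pθ).prod ν) := by
    refine ⟨hHm.aestronglyMeasurable, ?_⟩
    rw [HasFiniteIntegral, lintegral_prod _ hHm.enorm.aemeasurable]
    simp_rw [← hslice_enorm, ← lintegral_prod _ hFm.enorm.aemeasurable]
    exact hFint.2
  refine ⟨hHint, ?_⟩
  simp_rw [hF]
  rw [hΦ.integral_comp', integral_prod _ hFint, integral_prod _ hHint]
  simp_rw [hslice]

theorem measurable_logMeanRatio (hml : Measurable fun z : Θ × Y => l z.2 z.1) (i : ι) :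
    Measurable (logMeanRatio l i) := by
  have hlik : ∀ j, Measurable fun p : (ι → Θ) × Y => l p.2 (p.1 j) := fun j =>
    hml.likelihood_comp ((measurable_pi_apply j).comp measurable_fst) measurable_snd
  exact ((hlik i).div (measurable_const.mul (Finset.measurable_sum _ fun j _ => hlik j))).log

theorem integrable_likelihood_mul_logMeanRatio [IsFiniteMeasure Pθ] [Nonempty ι]
    (hml : Measurable fun z : Θ × Y => l z.2 z.1) (hl : ∀ y θ, 0 < l y θ)
    (hnorm : ∀ θ, ∫ y, l y θ ∂ν = 1)
    (hint : Integrable (fun w : ι → Θ × Y => (∏ i, l (w i).2 (w i).1) * srNMC l w)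
      (Measure.pi fun _ => Pθ.prod ν)) (i : ι) :
    Integrable
      (fun w : ι → Θ × Y => (∏ j, l (w j).2 (w j).1) * logMeanRatio l i (fun j => (w j).1, (w i).2))
      (Measure.pi fun _ => Pθ.prod ν) := by
  have hdensity : Integrable (fun w : ι → Θ × Y => ∏ j, l (w j).2 (w j).1)
      (Measure.pi fun _ => Pθ.prod ν) :=
    Integrable.fintype_prod fun _ => integrable_likelihood hml (fun y θ => (hl y θ).le) hnorm
  set T : ι → (ι → Θ × Y) → ℝ := fun i w =>
    (∏ j, l (w j).2 (w j).1) * logMeanRatio l i (fun j => (w j).1, (w i).2)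
  have hle : ∀ j ∈ univ, T j ≤ᵐ[Measure.pi fun _ => Pθ.prod ν]
      fun w => (∏ j, l (w j).2 (w j).1) * log (Fintype.card ι) := fun j _ =>
    .of_forall fun w => mul_le_mul_of_nonneg_left (logMeanRatio_le_log_card hl j _)
      (prod_nonneg fun k _ => (hl _ _).le)
  have hsum : Integrable (fun w => ∑ j, T j w) (Measure.pi fun _ => Pθ.prod ν) := by
    refine (hint.const_mul (Fintype.card ι : ℝ)).congr (.of_forall fun w => ?_)
    simp only [srNMC, T, ← mul_sum]
    rw [mul_left_comm, mul_inv_cancel_left₀ (by positivity)]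
  have hTm : Measurable (T i) :=
    (Finset.measurable_prod _ fun j _ => hml.comp (measurable_pi_apply j)).mul
      ((measurable_logMeanRatio hml i).comp ((measurable_pi_lambda _ fun j =>
        (measurable_pi_apply j).fst).prodMk (measurable_pi_apply i).snd))
  exact Integrable.of_sum_of_le hle (hdensity.mul_const _) hsum (mem_univ i)
    hTm.aestronglyMeasurable

theorem integral_likelihood_mul_srNMC [IsFiniteMeasure Pθ] [Nonempty ι]
    (hml : Measurable fun z : Θ × Y => l z.2 z.1)
    (hl : ∀ y θ, 0 < l y θ) (hnorm : ∀ θ, ∫ y, l y θ ∂ν = 1)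
    (hint : Integrable (fun w : ι → Θ × Y => (∏ i, l (w i).2 (w i).1) * srNMC l w)
      (Measure.pi fun _ => Pθ.prod ν)) :
    Integrable (fun p : (ι → Θ) × Y => uniformEntropy fun k => l p.2 (p.1 k))
        ((Measure.pi fun _ => Pθ).prod ν) ∧
      ∫ w : ι → Θ × Y, (∏ i, l (w i).2 (w i).1) * srNMC l w ∂(Measure.pi fun _ => Pθ.prod ν)
        = ∫ p : (ι → Θ) × Y, uniformEntropy (fun k => l p.2 (p.1 k))
            ∂((Measure.pi fun _ => Pθ).prod ν) := by
  have hsummand := integrable_likelihood_mul_logMeanRatio hml hl hnorm hint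
  have hmarg := fun i => integral_pi_likelihood_mul hml (fun y θ => (hl y θ).le) hnorm i
    (measurable_logMeanRatio hml i) (hsummand i)
  refine ⟨(integrable_finsetSum _ fun i _ => (hmarg i).1).const_mul _, ?_⟩
  have hsplit : ∀ w : ι → Θ × Y, (∏ i, l (w i).2 (w i).1) * srNMC l w = (Fintype.card ι : ℝ)⁻¹ *
      ∑ i, (∏ j, l (w j).2 (w j).1) * logMeanRatio l i (fun j => (w j).1, (w i).2) := fun w => by
    simp only [srNMC, mul_sum]
    exact sum_congr rfl fun _ _ => mul_left_comm _ _ _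
  simp_rw [hsplit]
  rw [integral_const_mul, integral_finsetSum _ fun i _ => hsummand i]
  simp_rw [(hmarg _).2]
  rw [← integral_finsetSum _ fun i _ => (hmarg i).1, ← integral_const_mul]
  rfl

variable {κ : Type*} [Fintype κ]

theorem integral_uniformEntropy_le [IsProbabilityMeasure Pθ] [Nonempty κ] [AddGroup ι] {e : κ → ι}
    (he : Injective e) (hl : ∀ y θ, 0 < l y θ)
    (hint₁ : Integrable (fun p : (κ → Θ) × Y => uniformEntropy fun k => l p.2 (p.1 k))
      ((Measure.pi fun _ => Pθ).prod ν))
    (hint₂ : Integrable (fun p : (ι → Θ) × Y => uniformEntropy fun k => l p.2 (p.1 k))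
      ((Measure.pi fun _ => Pθ).prod ν)) :
    ∫ p : (κ → Θ) × Y, uniformEntropy (fun k => l p.2 (p.1 k)) ∂((Measure.pi fun _ => Pθ).prod ν)
      ≤ ∫ p : (ι → Θ) × Y, uniformEntropy (fun i => l p.2 (p.1 i))
          ∂((Measure.pi fun _ => Pθ).prod ν) := by
  set U : (κ → Θ) × Y → ℝ := fun p => uniformEntropy fun k => l p.2 (p.1 k)
  set Ψ : ι → (ι → Θ) × Y → (κ → Θ) × Y := fun r => Prod.map (· ∘ fun k => e k + r) id
  have hΨ : ∀ r, MeasurePreserving (Ψ r) ((Measure.pi fun _ => Pθ).prod ν)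
      ((Measure.pi fun _ => Pθ).prod ν) := fun r =>
    (measurePreserving_comp_of_injective Pθ ((add_left_injective r).comp he)).prod (.id ν)
  have hintΨ : ∀ r, Integrable (fun p => U (Ψ r p)) ((Measure.pi fun _ => Pθ).prod ν) := fun r =>
    ((hΨ r).integrable_comp hint₁.aestronglyMeasurable).2 hint₁
  have hcomp : ∀ r, ∫ p, U (Ψ r p) ∂((Measure.pi fun _ => Pθ).prod ν)
      = ∫ p, U p ∂((Measure.pi fun _ => Pθ).prod ν) := fun r => by
    rw [← integral_map (hΨ r).measurable.aemeasurable, (hΨ r).map_eq]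
    exact (hΨ r).map_eq ▸ hint₁.aestronglyMeasurable
  have hι : (Fintype.card ι : ℝ) ≠ 0 := by positivity
  calc ∫ p, U p ∂((Measure.pi fun _ => Pθ).prod ν)
      = (Fintype.card ι : ℝ)⁻¹ * ∑ r, ∫ p, U (Ψ r p) ∂((Measure.pi fun _ => Pθ).prod ν) := by
        simp only [hcomp, sum_const, card_univ, nsmul_eq_mul, inv_mul_cancel_left₀ hι]
    _ = ∫ p, (Fintype.card ι : ℝ)⁻¹ * ∑ r, U (Ψ r p) ∂((Measure.pi fun _ => Pθ).prod ν) := by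
        rw [integral_const_mul, integral_finsetSum _ fun r _ => hintΨ r]
    _ ≤ _ := by
        refine integral_mono ((integrable_finsetSum _ fun r _ => hintΨ r).const_mul _) hint₂
          fun p => ?_
        exact sum_uniformEntropy_comp_add_le (v := fun i => l p.2 (p.1 i)) e fun i => hl _ _

end Likelihood

/-- Theorem 2 (part 2): the expectation of the srNMC estimator
`Û^M_srNMC(λ) = (1/M) Σᵢ log[ l(yⁱ|θⁱ,λ) / ((1/M) Σⱼ l(yⁱ|θʲ,λ)) ]`
is monotonically increasing in `M`: for `1 ≤ M₁ ≤ M₂`,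
`E[Û^{M₁}_srNMC(λ)] ≤ E[Û^{M₂}_srNMC(λ)]`.
The samples `(θⁱ, yⁱ)` are i.i.d. from the joint law of parameter and
observation, which has density `z ↦ l(z.2|z.1,λ)` w.r.t. `Pθ ⊗ ν`. -/
theorem srNMC_expectation_monotone
    {Θ Y : Type*} [MeasurableSpace Θ] [MeasurableSpace Y]
    (Pθ : Measure Θ) [IsProbabilityMeasure Pθ]
    (ν : Measure Y) [SigmaFinite ν]
    (l : Y → Θ → ℝ)
    (hml : Measurable fun z : Θ × Y => l z.2 z.1)
    (hl : ∀ y θ, 0 < l y θ)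
    -- `l(·|θ,λ)` is a probability density w.r.t. `ν` for every `θ`
    (hnorm : ∀ θ, ∫ y, l y θ ∂ν = 1)
    (M₁ M₂ : ℕ) (hM₁ : 1 ≤ M₁) (hM : M₁ ≤ M₂)
    -- integrability (all expectations are finite)
    (hIntE : ∀ M : ℕ, 1 ≤ M → Integrable
      (fun w : Fin M → Θ × Y => (∏ i, l (w i).2 (w i).1) *
        ((M : ℝ)⁻¹ * ∑ i, Real.log (l (w i).2 (w i).1 /
          ((M : ℝ)⁻¹ * ∑ j, l (w i).2 (w j).1))))
      (Measure.pi fun _ : Fin M => Pθ.prod ν)) :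
    (∫ w : Fin M₁ → Θ × Y, (∏ i, l (w i).2 (w i).1) *
        ((M₁ : ℝ)⁻¹ * ∑ i, Real.log (l (w i).2 (w i).1 /
          ((M₁ : ℝ)⁻¹ * ∑ j, l (w i).2 (w j).1)))
        ∂(Measure.pi fun _ : Fin M₁ => Pθ.prod ν)) ≤
      ∫ w : Fin M₂ → Θ × Y, (∏ i, l (w i).2 (w i).1) *
        ((M₂ : ℝ)⁻¹ * ∑ i, Real.log (l (w i).2 (w i).1 /
          ((M₂ : ℝ)⁻¹ * ∑ j, l (w i).2 (w j).1)))
        ∂(Measure.pi fun _ : Fin M₂ => Pθ.prod ν) := by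
  have : NeZero M₂ := ⟨by omega⟩
  have : Nonempty (Fin M₁) := ⟨⟨0, hM₁⟩⟩
  obtain ⟨hU₁, hE₁⟩ := integral_likelihood_mul_srNMC (ι := Fin M₁) (Pθ := Pθ) hml hl hnorm
    (by simpa only [srNMC, logMeanRatio, Fintype.card_fin] using hIntE M₁ hM₁)
  obtain ⟨hU₂, hE₂⟩ := integral_likelihood_mul_srNMC (ι := Fin M₂) (Pθ := Pθ) hml hl hnorm
    (by simpa only [srNMC, logMeanRatio, Fintype.card_fin] using hIntE M₂ (hM₁.trans hM))
  simp only [srNMC, logMeanRatio, Fintype.card_fin] at hE₁ hE₂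
  rw [hE₁, hE₂]
  exact integral_uniformEntropy_le (Fin.castLE_injective hM) hl hU₁ hU₂
end

section
/- If the likelihood is uniformly bounded: C₁ ≤ l(g(θ,ε,λ)|θ',λ) ≤ C₂ almost surely for positive constants C₁, C₂, then the mean squared error E[(U(λ) − Û^M_srNMC(λ))²] converges to 0 at rate O(1/M) as M → ∞. -/
/-!
Under the joint law `P` of `(θ, y)` (density `l(y|θ)` w.r.t. `Pθ ⊗ ν`) the pairs `(θᵢ, yᵢ)` are
i.i.d., so the estimator error splits into the plain Monte Carlo error of the average of
`log (l(yᵢ|θᵢ) / p(yᵢ))` and the error made by replacing `p(yᵢ)` with the inner average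
`p̂ᵢ = M⁻¹ ∑ⱼ l(yᵢ|θⱼ)`. Since `log` is `1/C₁`-Lipschitz on `[C₁, ∞)`, the second error is
controlled by `(p̂ᵢ - p(yᵢ))²`. Both errors are then averages `M⁻¹ ∑ⱼ h(Xᵢ, Xⱼ)` of a bounded
kernel with `∫ h(z, x) dP(x) = 0`. In the expansion of their square every off-diagonal term
vanishes after integrating out an index other than `i`, so the second moment is at most `C²/M`.
-/

open MeasureTheory Real
open scoped ENNReal

namespace MeasureTheory

theorem Measure.map_fst_withDensity_prod {Θ Y : Type*} [MeasurableSpace Θ] [MeasurableSpace Y]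
    (μ : Measure Θ) (ν : Measure Y) [SFinite μ] [SFinite ν] {f : Θ × Y → ℝ≥0∞}
    (hf : Measurable f) (hf1 : ∀ θ, ∫⁻ y, f (θ, y) ∂ν = 1) :
    ((μ.prod ν).withDensity f).map Prod.fst = μ := by
  ext s hs
  rw [Measure.map_apply measurable_fst hs, ← Set.prod_univ,
    withDensity_apply _ (hs.prod .univ), setLIntegral_prod _ hf.aemeasurable]
  simp [hf1]

variable {α : Type*} [MeasurableSpace α]

theorem lintegral_fin_prod_eq_prod (μ : Measure α) [SigmaFinite μ] :
    ∀ {n : ℕ} (f : Fin n → α → ℝ≥0∞), (∀ i, Measurable (f i)) →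
      ∫⁻ x, ∏ i, f i (x i) ∂(Measure.pi fun _ => μ) = ∏ i, ∫⁻ a, f i a ∂μ
  | 0, f, _ => by simp
  | n + 1, f, hf => by
    rw [← ((measurePreserving_piFinSuccAbove (fun _ => μ) 0).symm).lintegral_comp_emb
      (MeasurableEquiv.measurableEmbedding _)]
    simp_rw [MeasurableEquiv.piFinSuccAbove_symm_apply, Fin.insertNthEquiv,
      Fin.prod_univ_succ, Fin.insertNth_zero, Equiv.coe_fn_mk, Fin.cons_succ, cast_eq,
      Fin.cons_zero]
    rw [lintegral_prod_mul (f := f 0) (g := fun v : Fin n → α => ∏ i, f i.succ (v i))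
      (hf 0).aemeasurable (Finset.univ.measurable_prod fun i _ =>
        (hf i.succ).comp (measurable_pi_apply i)).aemeasurable,
      lintegral_fin_prod_eq_prod μ (fun i => f i.succ) fun i => hf i.succ]

theorem Measure.pi_withDensity (μ : Measure α) {f : α → ℝ≥0∞} (hf : Measurable f)
    [SigmaFinite μ] [SigmaFinite (μ.withDensity f)] (n : ℕ) :
    Measure.pi (fun _ : Fin n => μ.withDensity f) =
      (Measure.pi fun _ => μ).withDensity fun x => ∏ i, f (x i) := by
  refine Measure.pi_eq fun s hs => ?_
  rw [withDensity_apply _ (.univ_pi hs), ← lintegral_indicator (.univ_pi hs)]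
  have hind : (Set.univ.pi s).indicator (fun x : Fin n → α => ∏ i, f (x i)) =
      fun x => ∏ i, (s i).indicator f (x i) := by
    classical
    ext x
    simp [Set.indicator_apply, Finset.prod_ite_zero]
  rw [hind, lintegral_fin_prod_eq_prod μ _ fun i => hf.indicator (hs i)]
  simp_rw [withDensity_apply _ (hs _), lintegral_indicator (hs _)]

section ChangeOfMeasure

variable (μ : Measure α) {L : α → ℝ}

theorem integral_mul_eq_integral_withDensity (hL : Measurable L) (hL0 : ∀ a, 0 ≤ L a)
    (g : α → ℝ) :
    ∫ a, L a * g a ∂μ = ∫ a, g a ∂μ.withDensity fun a => ENNReal.ofReal (L a) := by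
  rw [integral_withDensity_eq_integral_toReal_smul hL.ennreal_ofReal
    (.of_forall fun _ => ENNReal.ofReal_lt_top)]
  simp [ENNReal.toReal_ofReal (hL0 _)]

theorem integral_pi_mul_eq_integral_pi_withDensity [SigmaFinite μ] (hL : Measurable L)
    (hL0 : ∀ a, 0 ≤ L a) [SigmaFinite (μ.withDensity fun a => ENNReal.ofReal (L a))] {n : ℕ}
    (G : (Fin n → α) → ℝ) :
    ∫ w, (∏ i, L (w i)) * G w ∂(Measure.pi fun _ => μ) =
      ∫ w, G w ∂(Measure.pi fun _ => μ.withDensity fun a => ENNReal.ofReal (L a)) := by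
  rw [Measure.pi_withDensity μ hL.ennreal_ofReal, integral_withDensity_eq_integral_toReal_smul
    (f := fun w : Fin n → α => ∏ i, ENNReal.ofReal (L (w i))) (by fun_prop)
    (.of_forall fun _ => ENNReal.prod_lt_top fun _ _ => ENNReal.ofReal_lt_top)]
  simp [ENNReal.toReal_prod, ENNReal.toReal_ofReal (hL0 _)]

end ChangeOfMeasure

theorem integral_pi_eq_zero_of_integral_update_eq_zero {P : Measure α} [SigmaFinite P] {n : ℕ}
    {F : (Fin n → α) → ℝ} (hF : Integrable F (Measure.pi fun _ => P)) (k : Fin n)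
    (h : ∀ w, ∫ x, F (Function.update w k x) ∂P = 0) :
    ∫ w, F w ∂(Measure.pi fun _ => P) = 0 := by
  cases n with
  | zero => exact k.elim0
  | succ n =>
    set e := MeasurableEquiv.piFinSuccAbove (fun _ : Fin (n + 1) => α) k
    have he := (measurePreserving_piFinSuccAbove (fun _ => P) k).symm
    have hF' : Integrable (fun x => F (e.symm x)) (P.prod (Measure.pi fun _ => P)) :=
      (he.integrable_comp_emb e.symm.measurableEmbedding).2 hF
    rw [← he.integral_comp', integral_prod_symm _ hF']
    refine integral_eq_zero_of_ae (.of_forall fun v => ?_)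
    rcases isEmpty_or_nonempty α with hα | ⟨⟨x₀⟩⟩
    · exact integral_of_isEmpty
    simpa [e, MeasurableEquiv.piFinSuccAbove_symm_apply, Fin.insertNthEquiv,
      Fin.update_insertNth] using h (k.insertNth x₀ v)

variable {P : Measure α} [IsProbabilityMeasure P] {n : ℕ}

section MeanZeroKernel

variable {h : α → α → ℝ} {C : ℝ}

theorem integrable_pairwise_mul (hm : Measurable (Function.uncurry h))
    (hC : ∀ z x, |h z x| ≤ C) (i j k : Fin n) :
    Integrable (fun w : Fin n → α => h (w i) (w j) * h (w i) (w k)) (Measure.pi fun _ => P) := by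
  have hmeas : ∀ j, Measurable fun w : Fin n → α => h (w i) (w j) := fun j =>
    hm.comp (f := fun w : Fin n → α => (w i, w j))
      ((measurable_pi_apply i).prodMk (measurable_pi_apply j))
  refine .of_bound ((hmeas j).mul (hmeas k)).aestronglyMeasurable (C * C)
    (.of_forall fun w => ?_)
  rw [Real.norm_eq_abs, abs_mul]
  exact mul_le_mul (hC _ _) (hC _ _) (abs_nonneg _) ((abs_nonneg _).trans (hC (w i) (w j)))

theorem integral_pairwise_mul_eq_zero (hm : Measurable (Function.uncurry h))
    (hC : ∀ z x, |h z x| ≤ C) (hmean : ∀ z, ∫ x, h z x ∂P = 0) {i j k : Fin n} (hjk : j ≠ k) :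
    ∫ w, h (w i) (w j) * h (w i) (w k) ∂(Measure.pi fun _ => P) = 0 := by
  wlog hki : k ≠ i generalizing j k
  · have hcomm : (fun w : Fin n → α => h (w i) (w j) * h (w i) (w k)) =
        fun w => h (w i) (w k) * h (w i) (w j) := funext fun w => mul_comm _ _
    rw [hcomm]
    exact this hjk.symm (not_not.1 hki ▸ hjk)
  refine integral_pi_eq_zero_of_integral_update_eq_zero
    (integrable_pairwise_mul hm hC i j k) k fun w => ?_
  simp only [Function.update_self, Function.update_of_ne hki.symm, Function.update_of_ne hjk]
  rw [integral_const_mul, hmean, mul_zero]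

theorem integral_sq_sum_pairwise_le (hm : Measurable (Function.uncurry h))
    (hC : ∀ z x, |h z x| ≤ C) (hmean : ∀ z, ∫ x, h z x ∂P = 0) (i : Fin n) :
    ∫ w, (∑ j, h (w i) (w j)) ^ 2 ∂(Measure.pi fun _ => P) ≤ n * C ^ 2 := by
  have hint := integrable_pairwise_mul (P := P) hm hC i
  have hdiag : ∀ j, ∫ w, h (w i) (w j) * h (w i) (w j) ∂(Measure.pi fun _ => P) ≤ C ^ 2 := by
    intro j
    calc _ ≤ ∫ _w, C ^ 2 ∂(Measure.pi fun _ => P) :=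
          integral_mono (hint j j) (integrable_const _) fun w => by
            rw [← sq, ← sq_abs]
            exact pow_le_pow_left₀ (abs_nonneg _) (hC _ _) 2
      _ = C ^ 2 := by simp
  simp_rw [sq (∑ j, _), Finset.sum_mul_sum]
  rw [integral_finsetSum _ fun j _ => integrable_finsetSum _ fun k _ => hint j k]
  simp_rw [integral_finsetSum _ fun k _ => hint _ k]
  calc ∑ j, ∑ k, ∫ w, h (w i) (w j) * h (w i) (w k) ∂(Measure.pi fun _ => P)
      = ∑ j, ∫ w, h (w i) (w j) * h (w i) (w j) ∂(Measure.pi fun _ => P) :=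
        Finset.sum_congr rfl fun j _ => Fintype.sum_eq_single j fun k hkj =>
          integral_pairwise_mul_eq_zero hm hC hmean (Ne.symm hkj)
    _ ≤ ∑ _j : Fin n, C ^ 2 := Finset.sum_le_sum fun j _ => hdiag j
    _ = n * C ^ 2 := by simp

theorem integral_sq_average_le (hm : Measurable (Function.uncurry h))
    (hC : ∀ z x, |h z x| ≤ C) (hmean : ∀ z, ∫ x, h z x ∂P = 0) (i : Fin n) :
    ∫ w, ((n : ℝ)⁻¹ * ∑ j, h (w i) (w j)) ^ 2 ∂(Measure.pi fun _ => P) ≤ C ^ 2 / n := by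
  have hn : (0 : ℝ) < n := by exact_mod_cast i.pos
  simp_rw [mul_pow]
  rw [integral_const_mul]
  calc ((n : ℝ)⁻¹) ^ 2 * ∫ w, (∑ j, h (w i) (w j)) ^ 2 ∂(Measure.pi fun _ => P)
      ≤ ((n : ℝ)⁻¹) ^ 2 * (n * C ^ 2) := by
        gcongr
        exact integral_sq_sum_pairwise_le hm hC hmean i
    _ = C ^ 2 / n := by field_simp

theorem integrable_sq_average (hm : Measurable (Function.uncurry h))
    (hC : ∀ z x, |h z x| ≤ C) (i : Fin n) :
    Integrable (fun w => ((n : ℝ)⁻¹ * ∑ j, h (w i) (w j)) ^ 2) (Measure.pi fun _ => P) := by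
  simp_rw [mul_pow, sq (∑ j, _), Finset.sum_mul_sum]
  exact (integrable_finsetSum _ fun j _ => integrable_finsetSum _ fun k _ =>
    integrable_pairwise_mul hm hC i j k).const_mul _

end MeanZeroKernel

section CenteredKernel

variable {g : α → α → ℝ} {a b : ℝ}

theorem integrable_of_mem_Icc {f : α → ℝ} (hf : Measurable f) (h : ∀ x, f x ∈ Set.Icc a b) :
    Integrable f P :=
  .of_bound hf.aestronglyMeasurable (max |a| |b|)
    (.of_forall fun x => abs_le_max_abs_abs (h x).1 (h x).2)

theorem measurable_uncurry_sub_integral (hm : Measurable (Function.uncurry g)) :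
    Measurable (Function.uncurry fun z x => g z x - ∫ x', g z x' ∂P) :=
  hm.sub (hm.stronglyMeasurable.integral_prod_right'.measurable.comp measurable_fst)

theorem abs_sub_integral_le (hm : Measurable (Function.uncurry g))
    (hg : ∀ z x, g z x ∈ Set.Icc a b) (z x : α) :
    |g z x - ∫ x', g z x' ∂P| ≤ b - a :=
  have h := (convex_Icc a b).integral_mem isClosed_Icc (.of_forall (hg z))
    (integrable_of_mem_Icc (f := g z) (hm.comp measurable_prodMk_left) (hg z))
  abs_sub_le_of_le_of_le (hg z x).1 (hg z x).2 h.1 h.2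

theorem integral_sub_integral_eq_zero (hm : Measurable (Function.uncurry g))
    (hg : ∀ z x, g z x ∈ Set.Icc a b) (z : α) :
    ∫ x, (g z x - ∫ x', g z x' ∂P) ∂P = 0 := by
  rw [integral_sub (integrable_of_mem_Icc (f := g z) (hm.comp measurable_prodMk_left) (hg z))
    (integrable_const _)]
  simp

theorem integral_le_of_le_sq_average_add_sq_average {gA gB : α → α → ℝ}
    (hmA : Measurable (Function.uncurry gA)) (hmB : Measurable (Function.uncurry gB))
    {aA bA aB bB : ℝ} (hgA : ∀ z x, gA z x ∈ Set.Icc aA bA)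
    (hgB : ∀ z x, gB z x ∈ Set.Icc aB bB) (c : ℝ) (i₀ : Fin n) {G : (Fin n → α) → ℝ}
    (hG0 : ∀ w, 0 ≤ G w)
    (hG : ∀ w, G w ≤ 2 * (((n : ℝ)⁻¹ * ∑ j, (gA (w i₀) (w j) - ∫ x, gA (w i₀) x ∂P)) ^ 2 +
      (n : ℝ)⁻¹ * ∑ i, ((n : ℝ)⁻¹ * ∑ j, (gB (w i) (w j) - ∫ x, gB (w i) x ∂P)) ^ 2 / c ^ 2)) :
    ∫ w, G w ∂(Measure.pi fun _ => P) ≤ 2 * ((bA - aA) ^ 2 + (bB - aB) ^ 2 / c ^ 2) / n := by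
  have hmA' := measurable_uncurry_sub_integral (P := P) hmA
  have hmB' := measurable_uncurry_sub_integral (P := P) hmB
  have hA := abs_sub_integral_le (P := P) hmA hgA
  have hB := abs_sub_integral_le (P := P) hmB hgB
  have hiA := integrable_sq_average (P := P) hmA' hA i₀
  have hiB : ∀ i : Fin n, Integrable _ _ := fun i =>
    (integrable_sq_average (P := P) hmB' hB i).div_const (c ^ 2)
  have hiB' := (integrable_finsetSum Finset.univ fun i _ => hiB i).const_mul (n : ℝ)⁻¹
  calc ∫ w, G w ∂(Measure.pi fun _ => P)
      ≤ 2 * (∫ w, ((n : ℝ)⁻¹ * ∑ j, (gA (w i₀) (w j) - ∫ x, gA (w i₀) x ∂P)) ^ 2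
          ∂(Measure.pi fun _ => P) +
        (n : ℝ)⁻¹ * ∑ i, (∫ w : Fin n → α,
          ((n : ℝ)⁻¹ * ∑ j, (gB (w i) (w j) - ∫ x, gB (w i) x ∂P)) ^ 2
            ∂(Measure.pi fun _ => P)) / c ^ 2) := by
        refine (integral_mono_of_nonneg (.of_forall hG0) ((hiA.add hiB').const_mul 2)
          (.of_forall hG)).trans_eq ?_
        simp only [Pi.add_apply]
        rw [integral_const_mul, integral_add hiA hiB', integral_const_mul,
          integral_finsetSum _ fun i _ => hiB i]
        simp_rw [integral_div]
    _ ≤ 2 * ((bA - aA) ^ 2 / n + (n : ℝ)⁻¹ * ∑ _i : Fin n, ((bB - aB) ^ 2 / n) / c ^ 2) := by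
        gcongr with i
        · exact integral_sq_average_le hmA' hA (integral_sub_integral_eq_zero hmA hgA) i₀
        · exact integral_sq_average_le hmB' hB (integral_sub_integral_eq_zero hmB hgB) i
    _ = 2 * ((bA - aA) ^ 2 + (bB - aB) ^ 2 / c ^ 2) / n := by
        have : (n : ℝ) ≠ 0 := by exact_mod_cast i₀.pos.ne'
        simp
        field_simp

end CenteredKernel

end MeasureTheory

theorem Real.abs_log_sub_log_le {C x y : ℝ} (hC : 0 < C) (hx : C ≤ x) (hy : C ≤ y) :
    |log x - log y| ≤ |x - y| / C := by
  wlog hxy : y ≤ x generalizing x y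
  · rw [abs_sub_comm, abs_sub_comm x]
    exact this hy hx (le_of_not_ge hxy)
  have hy0 : 0 < y := hC.trans_le hy
  rw [abs_of_nonneg (sub_nonneg.2 (log_le_log hy0 hxy)), abs_of_nonneg (sub_nonneg.2 hxy),
    ← log_div (hy0.trans_le hxy).ne' hy0.ne']
  calc log (x / y) ≤ x / y - 1 := log_le_sub_one_of_pos (div_pos (hy0.trans_le hxy) hy0)
    _ = (x - y) / y := by field_simp
    _ ≤ (x - y) / C := div_le_div_of_nonneg_left (sub_nonneg.2 hxy) hC hy

theorem le_inv_mul_sum {M : ℕ} (hM : 0 < M) {C : ℝ} {a : Fin M → ℝ} (ha : ∀ j, C ≤ a j) :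
    C ≤ (M : ℝ)⁻¹ * ∑ j, a j := by
  rw [inv_mul_eq_div, le_div_iff₀ (by positivity)]
  simpa [mul_comm] using Finset.sum_le_sum fun j (_ : j ∈ Finset.univ) => ha j

theorem inv_mul_sum_sub {M : ℕ} (hM : 0 < M) (a : Fin M → ℝ) (c : ℝ) :
    (M : ℝ)⁻¹ * ∑ j, (a j - c) = (M : ℝ)⁻¹ * ∑ j, a j - c := by
  rw [Finset.sum_sub_distrib, Finset.sum_const, Finset.card_univ, Fintype.card_fin,
    nsmul_eq_mul, mul_sub, inv_mul_cancel_left₀ (by positivity)]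

theorem sq_sub_average_log_div_le {M : ℕ} (hM : 0 < M) {C : ℝ} (hC : 0 < C) (U : ℝ)
    {x q : Fin M → ℝ} {a : Fin M → Fin M → ℝ} (hx : ∀ i, 0 < x i) (hq : ∀ i, C ≤ q i)
    (ha : ∀ i j, C ≤ a i j) :
    (U - (M : ℝ)⁻¹ * ∑ i, log (x i / ((M : ℝ)⁻¹ * ∑ j, a i j))) ^ 2 ≤
      2 * (((M : ℝ)⁻¹ * ∑ i, (log (x i / q i) - U)) ^ 2 +
        (M : ℝ)⁻¹ * ∑ i, ((M : ℝ)⁻¹ * ∑ j, (a i j - q i)) ^ 2 / C ^ 2) := by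
  set p : Fin M → ℝ := fun i => (M : ℝ)⁻¹ * ∑ j, a i j
  have hp : ∀ i, C ≤ p i := fun i => le_inv_mul_sum hM (ha i)
  have hsplit : U - (M : ℝ)⁻¹ * ∑ i, log (x i / p i) =
      -((M : ℝ)⁻¹ * ∑ i, (log (x i / q i) - U)) + (M : ℝ)⁻¹ * ∑ i, (log (p i) - log (q i)) := by
    have hlog : ∀ i, log (x i / p i) = (log (x i / q i) - U) - (log (p i) - log (q i)) + U :=
      fun i => by
        rw [log_div (hx i).ne' (hC.trans_le (hp i)).ne',
          log_div (hx i).ne' (hC.trans_le (hq i)).ne']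
        ring
    have hU : ∑ _i : Fin M, U = M * U := by simp
    simp_rw [hlog, Finset.sum_add_distrib, Finset.sum_sub_distrib, hU]
    field_simp
    ring
  have hjensen : ((M : ℝ)⁻¹ * ∑ i, (log (p i) - log (q i))) ^ 2 ≤
      (M : ℝ)⁻¹ * ∑ i, (p i - q i) ^ 2 / C ^ 2 := by
    calc ((M : ℝ)⁻¹ * ∑ i, (log (p i) - log (q i))) ^ 2
        ≤ (M : ℝ)⁻¹ * ∑ i, (log (p i) - log (q i)) ^ 2 := by
          simpa [inv_mul_eq_div] using
            sum_div_card_sq_le_sum_sq_div_card (s := Finset.univ)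
              (f := fun i => log (p i) - log (q i))
      _ ≤ (M : ℝ)⁻¹ * ∑ i, ((p i - q i) / C) ^ 2 := by
          refine mul_le_mul_of_nonneg_left (Finset.sum_le_sum fun i _ => ?_) (by positivity)
          rw [← sq_abs, ← sq_abs (_ / C), abs_div, abs_of_pos hC]
          exact pow_le_pow_left₀ (abs_nonneg _) (abs_log_sub_log_le hC (hp i) (hq i)) 2
      _ = (M : ℝ)⁻¹ * ∑ i, (p i - q i) ^ 2 / C ^ 2 := by simp_rw [div_pow]
  have hpq : ∀ i, p i - q i = (M : ℝ)⁻¹ * ∑ j, (a i j - q i) := fun i =>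
    (inv_mul_sum_sub hM (a i) (q i)).symm
  simp_rw [hpq] at hjensen
  rw [hsplit]
  refine add_sq_le.trans ?_
  rw [neg_sq]
  gcongr

theorem integral_sq_srNMC_error_le {Θ Y : Type*} [MeasurableSpace Θ] [MeasurableSpace Y]
    (P : Measure (Θ × Y)) [IsProbabilityMeasure P]
    {l : Y → Θ → ℝ} (hml : Measurable fun z : Θ × Y => l z.2 z.1) {C₁ C₂ : ℝ} (hC₁ : 0 < C₁)
    (hl : ∀ y θ, l y θ ∈ Set.Icc C₁ C₂) {M : ℕ} (hM : 0 < M) :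
    ∫ w : Fin M → Θ × Y, ((∫ z, log (l z.2 z.1 / ∫ x, l z.2 x.1 ∂P) ∂P) -
        (M : ℝ)⁻¹ * ∑ i, log (l (w i).2 (w i).1 / ((M : ℝ)⁻¹ * ∑ j, l (w i).2 (w j).1))) ^ 2
      ∂(Measure.pi fun _ => P) ≤ 10 * ((C₂ - C₁) / C₁) ^ 2 / M := by
  have hmB : Measurable (Function.uncurry fun z x : Θ × Y => l z.2 x.1) :=
    hml.comp (f := fun p : (Θ × Y) × (Θ × Y) => (p.2.1, p.1.2)) (by fun_prop)
  have hq : ∀ y, ∫ x, l y x.1 ∂P ∈ Set.Icc C₁ C₂ := fun y =>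
    (convex_Icc C₁ C₂).integral_mem isClosed_Icc (.of_forall fun x => hl _ _)
      (integrable_of_mem_Icc (hml.comp (f := fun x : Θ × Y => (x.1, y)) (by fun_prop))
        fun x => hl _ _)
  set f : Θ × Y → ℝ := fun z => log (l z.2 z.1 / ∫ x, l z.2 x.1 ∂P)
  have hfm : Measurable f :=
    (hml.div hmB.stronglyMeasurable.integral_prod_right'.measurable).log
  have hf : ∀ z, f z ∈ Set.Icc (-((C₂ - C₁) / C₁)) ((C₂ - C₁) / C₁) := fun z => by
    refine abs_le.1 ?_
    simp only [f]
    rw [log_div (hC₁.trans_le (hl _ _).1).ne' (hC₁.trans_le (hq _).1).ne']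
    refine (abs_log_sub_log_le hC₁ (hl _ _).1 (hq _).1).trans ?_
    gcongr
    exact abs_sub_le_of_le_of_le (hl _ _).1 (hl _ _).2 (hq _).1 (hq _).2
  calc _ ≤ 2 * (((C₂ - C₁) / C₁ - -((C₂ - C₁) / C₁)) ^ 2 + (C₂ - C₁) ^ 2 / C₁ ^ 2) / M :=
        integral_le_of_le_sq_average_add_sq_average (gA := fun _ x => f x) (hfm.comp measurable_snd)
          hmB (fun _ x => hf x) (fun _ _ => hl _ _) C₁ ⟨0, hM⟩ (fun _ => sq_nonneg _) fun w =>
          sq_sub_average_log_div_le hM hC₁ _ (fun i => hC₁.trans_le (hl _ _).1)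
            (fun i => (hq _).1) fun i j => (hl _ _).1
    _ = 10 * ((C₂ - C₁) / C₁) ^ 2 / M := by ring

/-- Theorem 3: if the likelihood is uniformly bounded, `C₁ ≤ l ≤ C₂` with
`0 < C₁`, then the mean squared error `E[(U(λ) − Û^M_srNMC(λ))²]` of the srNMC
estimator converges to `0` at rate `O(1/M)`: there is a constant `K` with
`MSE ≤ K/M` for all `M ≥ 1`.  The samples `(θⁱ, yⁱ)` are i.i.d. from the joint
law of parameter and observation, which has density `z ↦ l(z.2|z.1,λ)` w.r.t.
`Pθ ⊗ ν`, the marginal is `p(y|λ) = ∫ l(y|θ',λ) dPθ(θ')`, and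
`U(λ) = E[log(l(y|θ,λ)/p(y|λ))]` is the expected information gain. -/
theorem srNMC_mse_rate
    {Θ Y : Type*} [MeasurableSpace Θ] [MeasurableSpace Y]
    (Pθ : Measure Θ) [IsProbabilityMeasure Pθ]
    (ν : Measure Y) [SigmaFinite ν]
    (l : Y → Θ → ℝ)
    (hml : Measurable fun z : Θ × Y => l z.2 z.1)
    (C₁ C₂ : ℝ) (hC₁ : 0 < C₁)
    (hlb : ∀ y θ, C₁ ≤ l y θ) (hub : ∀ y θ, l y θ ≤ C₂)
    -- `l(·|θ,λ)` is a probability density w.r.t. `ν` for every `θ`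
    (hnorm : ∀ θ, ∫ y, l y θ ∂ν = 1) :
    ∃ K : ℝ, ∀ M : ℕ, 1 ≤ M →
      (∫ w : Fin M → Θ × Y, (∏ i, l (w i).2 (w i).1) *
        ((∫ z : Θ × Y, l z.2 z.1 *
            Real.log (l z.2 z.1 / ∫ θ', l z.2 θ' ∂Pθ) ∂(Pθ.prod ν)) -
          (M : ℝ)⁻¹ * ∑ i, Real.log (l (w i).2 (w i).1 /
            ((M : ℝ)⁻¹ * ∑ j, l (w i).2 (w j).1))) ^ 2
        ∂(Measure.pi fun _ : Fin M => Pθ.prod ν)) ≤ K / M := by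
  have hl0 : ∀ z : Θ × Y, 0 ≤ l z.2 z.1 := fun z => hC₁.le.trans (hlb _ _)
  set P := (Pθ.prod ν).withDensity fun z => ENNReal.ofReal (l z.2 z.1)
  have hPθ : P.map Prod.fst = Pθ := by
    refine Measure.map_fst_withDensity_prod Pθ ν hml.ennreal_ofReal fun θ => ?_
    rw [← ofReal_integral_eq_lintegral_ofReal (.of_integral_ne_zero (by simp [hnorm θ]))
      (.of_forall fun y => hl0 (θ, y)), hnorm θ, ENNReal.ofReal_one]
  have : IsProbabilityMeasure P :=
    (Measure.isProbabilityMeasure_map_iff measurable_fst.aemeasurable).1 (hPθ ▸ inferInstance)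
  have hq : ∀ y, ∫ x, l y x.1 ∂P = ∫ θ', l y θ' ∂Pθ := fun y => by
    conv_rhs => rw [← hPθ]
    exact (integral_map measurable_fst.aemeasurable
      (hml.comp (f := fun θ => (θ, y)) (by fun_prop)).aestronglyMeasurable).symm
  refine ⟨10 * ((C₂ - C₁) / C₁) ^ 2, fun M hM => ?_⟩
  have key := integral_sq_srNMC_error_le P hml hC₁ (fun y θ => ⟨hlb y θ, hub y θ⟩) hM
  simp only [hq] at key
  rwa [← integral_mul_eq_integral_withDensity _ hml hl0,
    ← integral_pi_mul_eq_integral_pi_withDensity _ hml hl0] at key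
end
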